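/- arXiv:2510.25374 — 2 statements merged into one kernel-verified Lean document; each statement's English description precedes it below -/
import Mathlib

section
/- Let A1 and A2 be the 2×2 matrices A1 = [[1 - M1^2, -M1*M2], [ρκ²M1M2, 1 - ρκ² + ρκ²M2²]] and A2 = [[-ρu2, ρu1], [-ρu1C, -ρu2C]], where M1 = u1/c, M2 = u2/c, M² = M1² + M2², C = 1 - ρκ² + ρκ²M². Assume ρ > 0, c > 0, u1 > 0. Then λ is a root of det(A1 - λA2) = 0 if and only if λ = (1/(ρ(u1²+u2²)))·(-u2 ± u1·sqrt((1-ρκ²)(M²-1)/C)), provided C ≠ 0 and u1² + u2² ≠ 0. -/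
/-!
Expanding the determinant shows that `det (A₁ - λ A₂)` is the quadratic
`ρ²C(u₁² + u₂²) λ² + 2ρCu₂ λ + (C - M₁²)` in `λ`. Its discriminant
`4ρ²C u₁² (1 - ρκ²)(M² - 1)` is the square of `2ρCu₁ √((1 - ρκ²)(M² - 1)/C)`,
so the quadratic formula gives the two roots.
-/

namespace MHDPencil

variable {ρ κ c u1 u2 M1 M2 C : ℝ}

theorem det_sub_smul_eq_quadratic (lam : ℝ) (hu1 : u1 = c * M1) (hu2 : u2 = c * M2)
    (hC : C = 1 - ρ * κ ^ 2 + ρ * κ ^ 2 * (M1 ^ 2 + M2 ^ 2)) :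
    Matrix.det
      ((!![1 - M1 ^ 2, -(M1 * M2); ρ * κ ^ 2 * M1 * M2,
            1 - ρ * κ ^ 2 + ρ * κ ^ 2 * M2 ^ 2] : Matrix (Fin 2) (Fin 2) ℝ)
        - lam • (!![-(ρ * u2), ρ * u1; -(ρ * u1 * C),
            -(ρ * u2 * C)] : Matrix (Fin 2) (Fin 2) ℝ))
      = ρ ^ 2 * C * (u1 ^ 2 + u2 ^ 2) * (lam * lam) + 2 * ρ * C * u2 * lam + (C - M1 ^ 2) := by
  subst hu1 hu2 hC
  simp only [Matrix.det_fin_two, Matrix.sub_apply, Matrix.smul_apply, Matrix.of_apply,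
    Matrix.cons_val', Matrix.cons_val_zero, Matrix.cons_val_one, Matrix.cons_val_fin_one,
    smul_eq_mul]
  ring

theorem discrim_pencil_quadratic (hu1 : u1 = c * M1) (hu2 : u2 = c * M2)
    (hC : C = 1 - ρ * κ ^ 2 + ρ * κ ^ 2 * (M1 ^ 2 + M2 ^ 2)) :
    discrim (ρ ^ 2 * C * (u1 ^ 2 + u2 ^ 2)) (2 * ρ * C * u2) (C - M1 ^ 2)
      = 4 * ρ ^ 2 * C * u1 ^ 2 * ((1 - ρ * κ ^ 2) * (M1 ^ 2 + M2 ^ 2 - 1)) := by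
  subst hu1 hu2 hC
  unfold discrim
  ring

end MHDPencil

open MHDPencil in
theorem mhd_pencil_eigenvalues_general (ρ c u1 u2 κ lam : ℝ)
    (hρ : 0 < ρ) (hc : 0 < c)
    (hu : u1 ^ 2 + u2 ^ 2 ≠ 0)
    (M1 M2 Msq C : ℝ)
    (hM1 : M1 = u1 / c) (hM2 : M2 = u2 / c)
    (hMsq : Msq = M1 ^ 2 + M2 ^ 2)
    (hC : C = 1 - ρ * κ ^ 2 + ρ * κ ^ 2 * Msq) (hC0 : C ≠ 0)
    (hD : 0 ≤ (1 - ρ * κ ^ 2) * (Msq - 1) / C) :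
    (Matrix.det
      ((!![1 - M1 ^ 2, -(M1 * M2); ρ * κ ^ 2 * M1 * M2,
            1 - ρ * κ ^ 2 + ρ * κ ^ 2 * M2 ^ 2] : Matrix (Fin 2) (Fin 2) ℝ)
        - lam • (!![-(ρ * u2), ρ * u1; -(ρ * u1 * C),
            -(ρ * u2 * C)] : Matrix (Fin 2) (Fin 2) ℝ)) = 0)
    ↔ (lam = (1 / (ρ * (u1 ^ 2 + u2 ^ 2))) *
          (-u2 + u1 * Real.sqrt ((1 - ρ * κ ^ 2) * (Msq - 1) / C))
      ∨ lam = (1 / (ρ * (u1 ^ 2 + u2 ^ 2))) *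
          (-u2 - u1 * Real.sqrt ((1 - ρ * κ ^ 2) * (Msq - 1) / C))) := by
  subst hMsq
  set s := Real.sqrt ((1 - ρ * κ ^ 2) * (M1 ^ 2 + M2 ^ 2 - 1) / C)
  have hu1 : u1 = c * M1 := by rw [hM1, mul_div_cancel₀ _ hc.ne']
  have hu2 : u2 = c * M2 := by rw [hM2, mul_div_cancel₀ _ hc.ne']
  have hs : C * (s * s) = (1 - ρ * κ ^ 2) * (M1 ^ 2 + M2 ^ 2 - 1) := by
    rw [Real.mul_self_sqrt hD, mul_div_cancel₀ _ hC0]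
  have hdiscrim : discrim (ρ ^ 2 * C * (u1 ^ 2 + u2 ^ 2)) (2 * ρ * C * u2) (C - M1 ^ 2)
      = (2 * ρ * C * u1 * s) * (2 * ρ * C * u1 * s) := by
    rw [discrim_pencil_quadratic hu1 hu2 hC]
    linear_combination (-4 * ρ ^ 2 * C * u1 ^ 2) * hs
  rw [det_sub_smul_eq_quadratic lam hu1 hu2 hC,
    quadratic_eq_zero_iff (by positivity) hdiscrim]
  congr! 2 <;> field_simp

/-- Eigenvalues of the pencil det(A1 - λA2) = 0 for the steady MHD system
in Lagrangian coordinates. -/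
theorem mhd_pencil_eigenvalues (ρ c u1 u2 κ lam : ℝ)
    (hρ : 0 < ρ) (hc : 0 < c) (hu1 : 0 < u1)
    (hu : u1 ^ 2 + u2 ^ 2 ≠ 0)
    (M1 M2 Msq C : ℝ)
    (hM1 : M1 = u1 / c) (hM2 : M2 = u2 / c)
    (hMsq : Msq = M1 ^ 2 + M2 ^ 2)
    (hC : C = 1 - ρ * κ ^ 2 + ρ * κ ^ 2 * Msq) (hC0 : C ≠ 0)
    (hD : 0 ≤ (1 - ρ * κ ^ 2) * (Msq - 1) / C) :
    (Matrix.det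
      ((!![1 - M1 ^ 2, -(M1 * M2); ρ * κ ^ 2 * M1 * M2,
            1 - ρ * κ ^ 2 + ρ * κ ^ 2 * M2 ^ 2] : Matrix (Fin 2) (Fin 2) ℝ)
        - lam • (!![-(ρ * u2), ρ * u1; -(ρ * u1 * C),
            -(ρ * u2 * C)] : Matrix (Fin 2) (Fin 2) ℝ)) = 0)
    ↔ (lam = (1 / (ρ * (u1 ^ 2 + u2 ^ 2))) *
          (-u2 + u1 * Real.sqrt ((1 - ρ * κ ^ 2) * (Msq - 1) / C))
      ∨ lam = (1 / (ρ * (u1 ^ 2 + u2 ^ 2))) *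
          (-u2 - u1 * Real.sqrt ((1 - ρ * κ ^ 2) * (Msq - 1) / C))) :=
  mhd_pencil_eigenvalues_general ρ c u1 u2 κ lam hρ hc hu M1 M2 Msq C hM1 hM2 hMsq hC hC0 hD
end

section
/- Suppose φ : [L0, η*] × [0,1] → ℝ is C¹ with ∂_{x1}φ = -ρ̄ū·u2 and ∂_{x2}φ = (1-M̄²)·u1 for continuous functions u1, u2 on [L0, η*]×[0,1]. If u1(L0, ·) ≡ 0, u2(L0, ·) ≡ 0, u2(y1, 0) = 0, and u2(y1, 1) = σ·ū·f'(y1) for a C¹ function f with f(L0) = 0, then for every y1 ∈ [L0, η*]: ((1-M̄²)/(ρ̄ū))·∫₀¹ u1(y1, y2) dy2 = -σ·ū·f(y1). -/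
/-!
Integrating `∂_{y₂}φ = (1 - M̄²) u₁` across the channel gives
`(1 - M̄²) ∫₀¹ u₁(y₁, ·) = G(y₁)` with `G(y₁) = φ(y₁, 1) - φ(y₁, 0)`.
Along the walls `∂_{y₁}φ = -ρ̄ū u₂`, so the boundary conditions give `G' = -ρ̄ū σ ū f'`,
while `G(L₀) = 0` because `u₁` vanishes at the entrance.
Integrating from `L₀` and using `f(L₀) = 0` yields `G(y₁) = -ρ̄ū σ ū f(y₁)`.
-/

open Set intervalIntegral

theorem integral_eq_sub_of_contDiff_of_deriv_eqOn {E : Type*} [NormedAddCommGroup E]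
    [NormedSpace ℝ E] [CompleteSpace E] {F g : ℝ → E} {a b : ℝ} (hF : ContDiff ℝ 1 F)
    (hab : a ≤ b) (hg : ∀ t ∈ Icc a b, deriv F t = g t) :
    ∫ t in a..b, g t = F b - F a := by
  rw [← integral_deriv_of_contDiffOn_Icc hF.contDiffOn hab]
  exact integral_congr fun t ht => (hg t (by rwa [uIcc_of_le hab] at ht)).symm

theorem supersonic_compatibility_general (L0 ηs σ ubar ρu M : ℝ)
    (hρu : 0 < ρu)
    (φ : ℝ × ℝ → ℝ) (u1 u2 : ℝ → ℝ → ℝ) (f : ℝ → ℝ)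
    (hφ : ContDiff ℝ 1 φ)
    (hf : ContDiff ℝ 1 f) (hf0 : f L0 = 0)
    (hφ1 : ∀ y1 ∈ Set.Icc L0 ηs, ∀ y2 ∈ Set.Icc (0:ℝ) 1,
      deriv (fun t => φ (t, y2)) y1 = -ρu * u2 y1 y2)
    (hφ2 : ∀ y1 ∈ Set.Icc L0 ηs, ∀ y2 ∈ Set.Icc (0:ℝ) 1,
      deriv (fun t => φ (y1, t)) y2 = (1 - M ^ 2) * u1 y1 y2)
    (hent1 : ∀ y2 ∈ Set.Icc (0:ℝ) 1, u1 L0 y2 = 0)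
    (hwall0 : ∀ y1 ∈ Set.Icc L0 ηs, u2 y1 0 = 0)
    (hwall1 : ∀ y1 ∈ Set.Icc L0 ηs, u2 y1 1 = σ * ubar * deriv f y1) :
    ∀ y1 ∈ Set.Icc L0 ηs,
      ((1 - M ^ 2) / ρu) * ∫ y2 in (0:ℝ)..1, u1 y1 y2 = -σ * ubar * f y1 := by
  intro y1 hy1
  have hrow (c : ℝ) : ContDiff ℝ 1 fun t => φ (t, c) :=
    hφ.comp (contDiff_id.prodMk contDiff_const)
  have flux (x : ℝ) (hx : x ∈ Icc L0 ηs) :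
      (1 - M ^ 2) * ∫ t in (0:ℝ)..1, u1 x t = φ (x, 1) - φ (x, 0) := by
    rw [← integral_const_mul]
    exact integral_eq_sub_of_contDiff_of_deriv_eqOn (hφ.comp (contDiff_const.prodMk contDiff_id))
      zero_le_one (hφ2 x hx)
  have entrance : φ (L0, 1) - φ (L0, 0) = 0 := by
    rw [← flux L0 ⟨le_rfl, hy1.1.trans hy1.2⟩, integral_congr (g := fun _ => (0:ℝ))
      fun t ht => hent1 t (by rwa [uIcc_of_le zero_le_one] at ht)]
    simp
  have along_walls : φ (y1, 1) - φ (y1, 0) - (φ (L0, 1) - φ (L0, 0))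
      = -ρu * σ * ubar * (f y1 - f L0) := by
    rw [← integral_eq_sub_of_contDiff_of_deriv_eqOn ((hrow 1).sub (hrow 0)) hy1.1
      (g := fun t => -ρu * σ * ubar * deriv f t), integral_const_mul,
      integral_deriv_of_contDiffOn_Icc hf.contDiffOn hy1.1]
    intro t ht
    have htI : t ∈ Icc L0 ηs := ⟨ht.1, ht.2.trans hy1.2⟩
    rw [deriv_fun_sub ((hrow 1).differentiable one_ne_zero t)
        ((hrow 0).differentiable one_ne_zero t),
      hφ1 t htI 1 (right_mem_Icc.2 zero_le_one), hφ1 t htI 0 (left_mem_Icc.2 zero_le_one),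
      hwall1 t htI, hwall0 t htI]
    ring
  rw [entrance, hf0] at along_walls
  rw [div_mul_eq_mul_div, flux y1 hy1, div_eq_iff hρu.ne']
  linarith

/-- Compatibility identity for the linearized supersonic solution (Lemma 3.1):
the averaged axial velocity perturbation is determined by the wall profile. -/
theorem supersonic_compatibility (L0 ηs σ ubar ρu M : ℝ)
    (hL : L0 < ηs) (hρu : 0 < ρu)
    (φ : ℝ × ℝ → ℝ) (u1 u2 : ℝ → ℝ → ℝ) (f : ℝ → ℝ)
    (hφ : ContDiff ℝ 1 φ)
    (hu1 : Continuous fun q : ℝ × ℝ => u1 q.1 q.2)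
    (hu2 : Continuous fun q : ℝ × ℝ => u2 q.1 q.2)
    (hf : ContDiff ℝ 1 f) (hf0 : f L0 = 0)
    (hφ1 : ∀ y1 ∈ Set.Icc L0 ηs, ∀ y2 ∈ Set.Icc (0:ℝ) 1,
      deriv (fun t => φ (t, y2)) y1 = -ρu * u2 y1 y2)
    (hφ2 : ∀ y1 ∈ Set.Icc L0 ηs, ∀ y2 ∈ Set.Icc (0:ℝ) 1,
      deriv (fun t => φ (y1, t)) y2 = (1 - M ^ 2) * u1 y1 y2)
    (hent1 : ∀ y2 ∈ Set.Icc (0:ℝ) 1, u1 L0 y2 = 0)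
    (hent2 : ∀ y2 ∈ Set.Icc (0:ℝ) 1, u2 L0 y2 = 0)
    (hwall0 : ∀ y1 ∈ Set.Icc L0 ηs, u2 y1 0 = 0)
    (hwall1 : ∀ y1 ∈ Set.Icc L0 ηs, u2 y1 1 = σ * ubar * deriv f y1) :
    ∀ y1 ∈ Set.Icc L0 ηs,
      ((1 - M ^ 2) / ρu) * ∫ y2 in (0:ℝ)..1, u1 y1 y2 = -σ * ubar * f y1 :=
  supersonic_compatibility_general L0 ηs σ ubar ρu M hρu φ u1 u2 f hφ hf hf0 hφ1 hφ2 hent1 hwall0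
    hwall1
end
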